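/- Let K be a simplicial complex and T ∈ K a face. Then for u ∈ T, the link of the edge {u, v_T} in Stellar(T, K) equals ∂(T \ {u}) * lk(T, K), where ∂(T \ {u}) denotes the boundary complex of the simplex on T \ {u}. -/

import Mathlib

def IsComplex (K : Finset (Finset ℕ)) : Prop :=
  ∅ ∈ K ∧ ∀ s ∈ K, ∀ t ⊆ s, t ∈ K

/-- The (open) star `st(T,K) = {S ∈ K : T ⊆ S}`. -/
def starC (T : Finset ℕ) (K : Finset (Finset ℕ)) : Finset (Finset ℕ) :=
  K.filter fun s => T ⊆ s

/-- The link `lk(T,K) = {S ∈ K : S ∩ T = ∅, S ∪ T ∈ K}`. -/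
def linkC (T : Finset ℕ) (K : Finset (Finset ℕ)) : Finset (Finset ℕ) :=
  K.filter fun s => s ∩ T = ∅ ∧ s ∪ T ∈ K

/-- The boundary complex `∂T` of the simplex on `T`: all proper subsets of `T`. -/
def bdry (T : Finset ℕ) : Finset (Finset ℕ) := T.powerset.erase T

/-- The join of two complexes (on disjoint vertex sets). -/
def joinC (K L : Finset (Finset ℕ)) : Finset (Finset ℕ) :=
  (K ×ˢ L).image fun p => p.1 ∪ p.2

/-- The stellar subdivision
`Stellar(T,K) = (K \ st(T,K)) ∪ ({v_T} * ∂T * lk(T,K))`, with `v` the new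
vertex `v_T`. -/
def stellar (T : Finset ℕ) (K : Finset (Finset ℕ)) (v : ℕ) : Finset (Finset ℕ) :=
  (K \ starC T K) ∪ joinC (({v} : Finset ℕ).powerset) (joinC (bdry T) (linkC T K))

/-! The link of the edge `{u, v_T}` consists of the faces `S` avoiding `u` and `v_T` such that
`S ∪ {u, v_T}` lies in the cone `{v_T} * ∂T * lk(T,K)`. Peeling off the cone point `v_T` leaves
`S ∪ {u} ∈ ∂T * lk(T,K)`; since `u ∈ T` avoids every face of `lk(T,K)`, the vertex `u` comes from
the `∂T` factor, and the proper subsets of `T` containing `u` are exactly the sets `{u} ∪ B`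
with `B` a proper subset of `T \ {u}`. -/

lemma mem_joinC {A B : Finset (Finset ℕ)} {s : Finset ℕ} :
    s ∈ joinC A B ↔ ∃ a ∈ A, ∃ b ∈ B, a ∪ b = s := by
  simp [joinC, and_assoc]

lemma mem_bdry {T s : Finset ℕ} : s ∈ bdry T ↔ s ⊆ T ∧ s ≠ T := by
  simp [bdry, and_comm]

lemma mem_linkC {T s : Finset ℕ} {K : Finset (Finset ℕ)} :
    s ∈ linkC T K ↔ s ∈ K ∧ s ∩ T = ∅ ∧ s ∪ T ∈ K := by
  simp [linkC]

lemma mem_linkC_pair {K : Finset (Finset ℕ)} {u v : ℕ} {s : Finset ℕ} :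
    s ∈ linkC {u, v} K ↔ s ∈ K ∧ u ∉ s ∧ v ∉ s ∧ insert v (insert u s) ∈ K := by
  have hunion : s ∪ {u, v} = insert v (insert u s) := by
    ext; simp only [Finset.mem_union, Finset.mem_insert, Finset.mem_singleton]; tauto
  have hinter : s ∩ {u, v} = ∅ ↔ u ∉ s ∧ v ∉ s := by
    rw [Finset.eq_empty_iff_forall_notMem]; grind
  rw [mem_linkC, hunion, hinter, and_assoc]

lemma notMem_of_mem_joinC {A B : Finset (Finset ℕ)} {x : ℕ} {s : Finset ℕ}
    (hA : ∀ a ∈ A, x ∉ a) (hB : ∀ b ∈ B, x ∉ b) (hs : s ∈ joinC A B) : x ∉ s := by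
  obtain ⟨a, ha, b, hb, rfl⟩ := mem_joinC.1 hs
  simp [hA a ha, hB b hb]

lemma notMem_of_mem_bdry {T s : Finset ℕ} {x : ℕ} (hx : x ∉ T) (hs : s ∈ bdry T) : x ∉ s :=
  fun h => hx ((mem_bdry.1 hs).1 h)

lemma notMem_of_mem_linkC {T s : Finset ℕ} {K : Finset (Finset ℕ)} {x : ℕ} (hx : x ∈ T)
    (hs : s ∈ linkC T K) : x ∉ s := by
  intro h
  have : x ∈ s ∩ T := Finset.mem_inter.2 ⟨h, hx⟩
  simp [(mem_linkC.1 hs).2.1] at this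

lemma insert_mem_joinC_iff {A B : Finset (Finset ℕ)} {u : ℕ} {s : Finset ℕ}
    (hB : ∀ b ∈ B, u ∉ b) (hs : u ∉ s) :
    insert u s ∈ joinC A B ↔ ∃ a, u ∉ a ∧ insert u a ∈ A ∧ ∃ b ∈ B, a ∪ b = s := by
  rw [mem_joinC]
  constructor
  · rintro ⟨a, ha, b, hb, hab⟩
    have hua : u ∈ a := by
      have : u ∈ a ∪ b := hab ▸ Finset.mem_insert_self u s
      exact (Finset.mem_union.1 this).resolve_right (hB b hb)
    refine ⟨a.erase u, Finset.notMem_erase u a, by rwa [Finset.insert_erase hua], b, hb, ?_⟩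
    calc a.erase u ∪ b = (a ∪ b).erase u := by
          rw [Finset.erase_union_distrib, Finset.erase_eq_of_notMem (hB b hb)]
      _ = s := by rw [hab, Finset.erase_insert hs]
  · rintro ⟨a, -, ha, b, hb, rfl⟩
    exact ⟨insert u a, ha, b, hb, Finset.insert_union u a b⟩

lemma insert_mem_joinC_powerset_singleton_iff {B : Finset (Finset ℕ)} {v : ℕ} {s : Finset ℕ}
    (hB : ∀ b ∈ B, v ∉ b) (hs : v ∉ s) :
    insert v s ∈ joinC ({v} : Finset ℕ).powerset B ↔ s ∈ B := by
  rw [insert_mem_joinC_iff hB hs]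
  constructor
  · rintro ⟨a, hva, hsub, b, hb, rfl⟩
    have ha : a = ∅ := by
      rw [Finset.mem_powerset, Finset.insert_subset_iff] at hsub
      exact Finset.subset_singleton_iff.1 hsub.2 |>.resolve_right (by rintro rfl; simp at hva)
    simpa [ha] using hb
  · intro hsB
    exact ⟨∅, Finset.notMem_empty v, by simp, s, hsB, Finset.empty_union s⟩

lemma insert_mem_bdry_iff {T a : Finset ℕ} {u : ℕ} (hu : u ∈ T) (ha : u ∉ a) :
    insert u a ∈ bdry T ↔ a ∈ bdry (T.erase u) := by
  have hsub : insert u a ⊆ T ↔ a ⊆ T.erase u := by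
    rw [Finset.insert_subset_iff, Finset.subset_erase]; tauto
  have hne : insert u a = T ↔ a = T.erase u := by
    constructor
    · rintro rfl; exact (Finset.erase_insert ha).symm
    · rintro rfl; exact Finset.insert_erase hu
  rw [mem_bdry, mem_bdry, hsub, ne_eq, hne]

lemma insert_mem_joinC_bdry_iff {T : Finset ℕ} {B : Finset (Finset ℕ)} {u : ℕ} {s : Finset ℕ}
    (hu : u ∈ T) (hB : ∀ b ∈ B, u ∉ b) (hs : u ∉ s) :
    insert u s ∈ joinC (bdry T) B ↔ s ∈ joinC (bdry (T.erase u)) B := by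
  rw [insert_mem_joinC_iff hB hs, mem_joinC]
  constructor
  · rintro ⟨a, hua, ha, hab⟩
    exact ⟨a, (insert_mem_bdry_iff hu hua).1 ha, hab⟩
  · rintro ⟨a, ha, hab⟩
    have hua : u ∉ a := notMem_of_mem_bdry (Finset.notMem_erase u T) ha
    exact ⟨a, hua, (insert_mem_bdry_iff hu hua).2 ha, hab⟩

lemma insert_mem_stellar_iff {T : Finset ℕ} {K : Finset (Finset ℕ)} {v : ℕ} {s : Finset ℕ}
    (hv : ∀ t ∈ K, v ∉ t) (hvT : v ∉ T) (hs : v ∉ s) :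
    insert v s ∈ stellar T K v ↔ s ∈ joinC (bdry T) (linkC T K) := by
  have hvK : insert v s ∉ K \ starC T K :=
    fun h => hv _ (Finset.mem_sdiff.1 h).1 (Finset.mem_insert_self v s)
  have hvJ : ∀ b ∈ joinC (bdry T) (linkC T K), v ∉ b := fun b =>
    notMem_of_mem_joinC (fun _ => notMem_of_mem_bdry hvT)
      (fun l hl => hv l (mem_linkC.1 hl).1)
  rw [stellar, Finset.mem_union, or_iff_right hvK,
    insert_mem_joinC_powerset_singleton_iff hvJ hs]

lemma mem_stellar_of_mem_of_not_subset {T s : Finset ℕ} {K : Finset (Finset ℕ)} (v : ℕ)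
    (hs : s ∈ K) (hTs : ¬ T ⊆ s) : s ∈ stellar T K v := by
  simp [stellar, starC, hs, hTs]

lemma mem_of_mem_joinC_bdry_linkC {T T' s : Finset ℕ} {K : Finset (Finset ℕ)}
    (hK : IsComplex K) (hT' : T' ⊆ T) (hs : s ∈ joinC (bdry T') (linkC T K)) : s ∈ K := by
  obtain ⟨a, ha, l, hl, rfl⟩ := mem_joinC.1 hs
  refine hK.2 _ (mem_linkC.1 hl).2.2 _ (Finset.union_subset ?_ Finset.subset_union_left)
  exact ((mem_bdry.1 ha).1.trans hT').trans Finset.subset_union_right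

theorem link_edge_stellar_general
    (K : Finset (Finset ℕ)) (T : Finset ℕ) (v : ℕ) (u : ℕ)
    (hK : IsComplex K) (hT : T ∈ K) (hu : u ∈ T)
    (hv : ∀ s ∈ K, v ∉ s) :
    linkC {u, v} (stellar T K v) = joinC (bdry (T.erase u)) (linkC T K) := by
  have hvT : v ∉ T := hv T hT
  have hvu : v ≠ u := fun h => hvT (h ▸ hu)
  have huL : ∀ l ∈ linkC T K, u ∉ l := fun _ => notMem_of_mem_linkC hu
  have hcone : ∀ S, u ∉ S → v ∉ S →
      (insert v (insert u S) ∈ stellar T K v ↔ S ∈ joinC (bdry (T.erase u)) (linkC T K)) :=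
    fun S huS hvS => by
      rw [insert_mem_stellar_iff hv hvT (by simp [hvS, hvu]),
        insert_mem_joinC_bdry_iff hu huL huS]
  ext S
  rw [mem_linkC_pair]
  constructor
  · rintro ⟨-, huS, hvS, hS⟩
    exact (hcone S huS hvS).1 hS
  · intro hS
    have huS : u ∉ S :=
      notMem_of_mem_joinC (fun _ => notMem_of_mem_bdry (Finset.notMem_erase u T)) huL hS
    have hvS : v ∉ S :=
      notMem_of_mem_joinC (fun _ => notMem_of_mem_bdry fun h => hvT (Finset.mem_of_mem_erase h))
        (fun l hl => hv l (mem_linkC.1 hl).1) hS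
    have hSK : S ∈ K := mem_of_mem_joinC_bdry_linkC hK (Finset.erase_subset u T) hS
    exact ⟨mem_stellar_of_mem_of_not_subset v hSK (fun h => huS (h hu)), huS, hvS,
      (hcone S huS hvS).2 hS⟩

/-- for a face `T ∈ K` and `u ∈ T`, the link of the edge
`{u, v_T}` in `Stellar(T,K)` equals `∂(T \ {u}) * lk(T,K)`. -/
theorem link_edge_stellar
    (K : Finset (Finset ℕ)) (T : Finset ℕ) (v : ℕ) (u : ℕ)
    (hK : IsComplex K) (hT : T ∈ K) (hT2 : 2 ≤ T.card) (hu : u ∈ T)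
    (hv : ∀ s ∈ K, v ∉ s) :
    linkC {u, v} (stellar T K v) = joinC (bdry (T.erase u)) (linkC T K) :=
  link_edge_stellar_general K T v u hK hT hu hv
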